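/- arXiv:1710.07497 — 3 statements merged into one kernel-verified Lean document; each statement's English description precedes it below -/
import Mathlib

section
/- For any matrix A in F_q^{m×n} there exists a partition S_0, S_1, ..., S_n of [n] into pairwise disjoint (possibly empty) sets such that: (i) for every i in S_0, every x in ker(A) has x_i = 0; (ii) if i, j belong to the same class S_u with u ≥ 1, then there exists s in F_q \ {0} such that every x in ker(A) satisfies x_j = s x_i, and the marginal of each coordinate in S_u under the uniform distribution on ker(A) is uniform on F_q; (iii) if i in S_u and j in S_v with 1 ≤ u < v, then under the uniform distribution on ker(A) the pair (x_i, x_j) is uniform on F_q × F_q. -/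
/-!
The coordinates of `ker A` are linear functionals on `ker A`. Those vanishing identically form
`S 0`; the others are grouped into the orbits of `Fˣ`, i.e. by proportionality. A nonzero
functional is surjective onto `F`, two non-proportional nonzero functionals are jointly
surjective onto `F × F`, and all fibres of a surjective group homomorphism have the size of its
kernel; this gives the uniformity of the marginals.
-/

open Function

theorem exists_proportionality_labeling {K M : Type*} [Field K] [AddCommGroup M] [Module K M]
    {n : ℕ} (v : Fin n → M) :
    ∃ c : Fin n → Fin (n + 1), (∀ i, c i = 0 ↔ v i = 0) ∧
      ∀ i j, v i ≠ 0 → (c i = c j ↔ ∃ s : K, s ≠ 0 ∧ v j = s • v i) := by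
  classical
  let r : Setoid (Fin n) := (MulAction.orbitRel Kˣ M).comap v
  have hr : ∀ i j, r j i ↔ ∃ s : K, s ≠ 0 ∧ v j = s • v i := fun i j => by
    rw [Setoid.comap_rel, MulAction.orbitRel_apply, MulAction.mem_orbit_iff,
      ← Units.exists_iff_ne_zero (p := fun s : K => v j = s • v i)]
    simp only [Units.smul_def, eq_comm]
  refine ⟨fun i => if v i = 0 then 0 else (Quotient.mk r i).out.succ, fun i => ?_,
    fun i j hi => ?_⟩
  · by_cases h : v i = 0 <;> simp [h, Fin.succ_ne_zero]
  by_cases hj : v j = 0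
  · simp only [hi, hj, if_false, if_true, Fin.succ_ne_zero, false_iff]
    rintro ⟨s, hs, h⟩
    exact hi ((smul_eq_zero.1 h.symm).resolve_left hs)
  · simp only [hi, hj, if_false, Fin.succ_inj, Quotient.out_inj, Quotient.eq, ← hr]
    exact ⟨Setoid.symm, Setoid.symm⟩

theorem AddMonoidHom.card_fiber_mul_card_of_surjective {G H : Type*} [AddGroup G] [AddGroup H]
    {f : G →+ H} (hf : Surjective f) (h : H) :
    Nat.card {x // f x = h} * Nat.card H = Nat.card G := by
  rw [← f.ker.card_mul_index, AddSubgroup.index_ker, f.range_eq_top.2 hf, AddSubgroup.card_top,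
    ← Nat.card_congr (fiberEquivKerOfSurjective hf h)]
  rfl

theorem LinearMap.prod_surjective_of_forall_ne_smul {K V : Type*} [Field K] [AddCommGroup V]
    [Module K V] {f g : V →ₗ[K] K} (hf : f ≠ 0) (hg : ∀ s : K, g ≠ s • f) :
    Surjective (f.prod g) := by
  by_contra hns
  obtain ⟨φ, hφ, hle⟩ := (range (f.prod g)).exists_le_ker_of_lt_top
    (lt_top_iff_ne_top.2 (mt range_eq_top.1 hns))
  -- `φ` annihilates the range, so it yields a linear relation between `f` and `g`.
  have hφ_apply : ∀ a b : K, φ (a, b) = a * φ (1, 0) + b * φ (0, 1) := fun a b => by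
    rw [show ((a, b) : K × K) = a • (1, 0) + b • (0, 1) by simp, map_add, map_smul, map_smul,
      smul_eq_mul, smul_eq_mul]
  have hrel : ∀ v, f v * φ (1, 0) + g v * φ (0, 1) = 0 := fun v => by
    rw [← hφ_apply]; exact hle ⟨v, rfl⟩
  by_cases hb : φ (0, 1) = 0
  · have ha : φ (1, 0) ≠ 0 := fun ha =>
      hφ (LinearMap.ext fun p => by simp [hφ_apply p.1 p.2, ha, hb])
    exact hf (LinearMap.ext fun v => by simpa [hb, ha] using hrel v)
  · refine hg (-(φ (1, 0) / φ (0, 1))) (LinearMap.ext fun v => ?_)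
    have := hrel v
    simp only [LinearMap.smul_apply, smul_eq_mul]
    field_simp
    linear_combination this

section Coordinates

variable {F ι : Type*} [Field F] (W : Submodule F (ι → F))

def restrictedCoord (i : ι) : Module.Dual F W := (LinearMap.proj i).domRestrict W

@[simp]
theorem restrictedCoord_apply (i : ι) (x : W) : restrictedCoord W i x = (x : ι → F) i := rfl

variable [Fintype F]

theorem card_coord_fiber_mul_card {i : ι} (hi : restrictedCoord W i ≠ 0) (σ : F) :
    Nat.card {x : ι → F // x ∈ W ∧ x i = σ} * Fintype.card F = Nat.card W := by
  rw [← Nat.card_eq_fintype_card, ← AddMonoidHom.card_fiber_mul_card_of_surjective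
    (f := (restrictedCoord W i).toAddMonoidHom) (LinearMap.surjective_of_ne_zero hi) σ,
    ← Nat.card_congr (Equiv.subtypeSubtypeEquivSubtypeInter (· ∈ W) (· i = σ))]
  rfl

theorem card_coord_pair_fiber_mul_card {i j : ι} (hi : restrictedCoord W i ≠ 0)
    (hj : restrictedCoord W j ≠ 0)
    (hij : ¬∃ s : F, s ≠ 0 ∧ restrictedCoord W j = s • restrictedCoord W i) (σ τ : F) :
    Nat.card {x : ι → F // x ∈ W ∧ x i = σ ∧ x j = τ} * Fintype.card F ^ 2
      = Nat.card W := by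
  have hsurj : Surjective ((restrictedCoord W i).prod (restrictedCoord W j)) := by
    refine LinearMap.prod_surjective_of_forall_ne_smul hi fun s h => ?_
    rcases eq_or_ne s 0 with rfl | hs
    · exact hj (by simpa using h)
    · exact hij ⟨s, hs, h⟩
  rw [sq, ← Fintype.card_prod, ← Nat.card_eq_fintype_card,
    ← AddMonoidHom.card_fiber_mul_card_of_surjective
      (f := ((restrictedCoord W i).prod (restrictedCoord W j)).toAddMonoidHom) hsurj (σ, τ),
    ← Nat.card_congr
      (Equiv.subtypeSubtypeEquivSubtypeInter (· ∈ W) (fun x => x i = σ ∧ x j = τ))]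
  simp [Prod.ext_iff]

end Coordinates

theorem kernel_coordinate_decomposition_general
    (F : Type*) [Field F] [Fintype F]
    (m n : ℕ) (A : Matrix (Fin m) (Fin n) F) :
    ∃ S : Fin (n + 1) → Finset (Fin n),
      (∀ u v : Fin (n + 1), u ≠ v → Disjoint (S u) (S v)) ∧
      (∀ i : Fin n, ∃ u, i ∈ S u) ∧
      (∀ i ∈ S 0, ∀ x : Fin n → F, A.mulVec x = 0 → x i = 0) ∧
      (∀ u : Fin (n + 1), 1 ≤ u.val →
        (∀ i ∈ S u, ∀ j ∈ S u, ∃ s : F, s ≠ 0 ∧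
          ∀ x : Fin n → F, A.mulVec x = 0 → x j = s * x i) ∧
        (∀ i ∈ S u, ∀ σ : F,
          Nat.card {x : Fin n → F // A.mulVec x = 0 ∧ x i = σ} * Fintype.card F
            = Nat.card {x : Fin n → F // A.mulVec x = 0})) ∧
      (∀ u v : Fin (n + 1), 1 ≤ u.val → u.val < v.val →
        ∀ i ∈ S u, ∀ j ∈ S v, ∀ σ τ : F,
          Nat.card {x : Fin n → F // A.mulVec x = 0 ∧ x i = σ ∧ x j = τ} * Fintype.card F ^ 2
            = Nat.card {x : Fin n → F // A.mulVec x = 0}) := by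
  set W := LinearMap.ker A.mulVecLin
  obtain ⟨c, hc0, hc⟩ := exists_proportionality_labeling (K := F) (restrictedCoord W)
  have hne : ∀ i, 1 ≤ (c i).val → restrictedCoord W i ≠ 0 := fun i hi h => by
    simp [(hc0 i).2 h] at hi
  refine ⟨fun u => Finset.univ.filter (c · = u),
    fun u v huv => Finset.disjoint_filter.2 fun i _ hu hv => huv (hu ▸ hv),
    fun i => ⟨c i, by simp⟩, fun i hi x hx => ?_,
    fun u hu => ⟨fun i hi j hj => ?_, ?_⟩, ?_⟩
  · exact LinearMap.congr_fun ((hc0 i).1 (Finset.mem_filter.1 hi).2) ⟨x, hx⟩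
  · simp only [Finset.mem_filter, Finset.mem_univ, true_and] at hi hj
    obtain ⟨s, hs, h⟩ := (hc i j (hne i (hi ▸ hu))).1 (hi.trans hj.symm)
    exact ⟨s, hs, fun x hx => LinearMap.congr_fun h ⟨x, hx⟩⟩
  · intro i hi σ
    simp only [Finset.mem_filter, Finset.mem_univ, true_and] at hi
    exact card_coord_fiber_mul_card W (hne i (hi ▸ hu)) σ
  · intro u v hu huv i hi j hj σ τ
    simp only [Finset.mem_filter, Finset.mem_univ, true_and] at hi hj
    refine card_coord_pair_fiber_mul_card W (hne i (hi ▸ hu)) (hne j (hj ▸ hu.trans huv.le))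
      (fun h => huv.ne ?_) σ τ
    rw [← hi, ← hj, (hc i j (hne i (hi ▸ hu))).2 h]

theorem kernel_coordinate_decomposition
    (F : Type*) [Field F] [Fintype F] [DecidableEq F]
    (m n : ℕ) (A : Matrix (Fin m) (Fin n) F) :
    ∃ S : Fin (n + 1) → Finset (Fin n),
      (∀ u v : Fin (n + 1), u ≠ v → Disjoint (S u) (S v)) ∧
      (∀ i : Fin n, ∃ u, i ∈ S u) ∧
      (∀ i ∈ S 0, ∀ x : Fin n → F, A.mulVec x = 0 → x i = 0) ∧
      (∀ u : Fin (n + 1), 1 ≤ u.val →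
        (∀ i ∈ S u, ∀ j ∈ S u, ∃ s : F, s ≠ 0 ∧
          ∀ x : Fin n → F, A.mulVec x = 0 → x j = s * x i) ∧
        (∀ i ∈ S u, ∀ σ : F,
          Nat.card {x : Fin n → F // A.mulVec x = 0 ∧ x i = σ} * Fintype.card F
            = Nat.card {x : Fin n → F // A.mulVec x = 0})) ∧
      (∀ u v : Fin (n + 1), 1 ≤ u.val → u.val < v.val →
        ∀ i ∈ S u, ∀ j ∈ S v, ∀ σ τ : F,
          Nat.card {x : Fin n → F // A.mulVec x = 0 ∧ x i = σ ∧ x j = τ} * Fintype.card F ^ 2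
            = Nat.card {x : Fin n → F // A.mulVec x = 0}) :=
  kernel_coordinate_decomposition_general F m n A
end

section
/- Let k ≥ 3, d > 0, φ(α) = exp(-d α^{k-1}) + d α^{k-1} - (d(k-1)/k) α^k - d/k, ρ = ρ_{k,d} = sup{x in [0,1] : x = 1 - exp(-d x^{k-1})}, and suppose that ρ - d ρ^{k-1} + d(1-1/k) ρ^k ≥ 0 (i.e., d ≤ d_k). Then sup_{α in [0,1]} φ(α) = φ(0) = 1 - d/k. -/
/-!
With `n = k - 1`, `φ'(α) = d n α^(n-1) r(α)` where `r(t) = 1 - exp (-d t^n) - t` is the residual of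
the fixed-point equation. On `t > 0`, `r'(t) = d n exp ((n-1) log t - d t^n) - 1` is an increasing
function of a concave function, hence quasiconcave; together with `r 0 = 0` this forces
`{t > 0 | r t ≥ 0}` to be an interval, whose right end is the largest root `ρ`. So on `[0, 1]`
the potential `φ` is maximised at `0` or at `ρ`, and the hypothesis says `φ ρ ≤ φ 0`.
-/

open Real Set

theorem ordConnected_nonneg_of_quasiconcaveOn_deriv {f f' : ℝ → ℝ} {a : ℝ}
    (hf : ContinuousOn f (Ici a)) (hderiv : ∀ t, a < t → HasDerivAt f (f' t) t)
    (hf' : QuasiconcaveOn ℝ (Ioi a) f') (ha : f a ≤ 0) :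
    OrdConnected {t | a < t ∧ 0 ≤ f t} := by
  refine ⟨fun x hx z hz y hy => ⟨hx.1.trans_le hy.1, ?_⟩⟩
  rcases hy.1.eq_or_lt with rfl | hxy
  · exact hx.2
  rcases hy.2.eq_or_lt with rfl | hyz
  · exact hz.2
  by_contra! hfy
  have hcont : ∀ {u v}, a ≤ u → ContinuousOn f (Icc u v) := fun hu =>
    hf.mono fun t ht => hu.trans ht.1
  obtain ⟨p, hp, hfp⟩ := exists_hasDerivAt_eq_slope f f' hxy (hcont hx.1.le)
    fun t ht => hderiv t (hx.1.trans ht.1)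
  obtain ⟨q, hq, hfq⟩ := exists_hasDerivAt_eq_slope f f' hyz (hcont (hx.1.trans hxy).le)
    fun t ht => hderiv t ((hx.1.trans hxy).trans ht.1)
  have hp_neg : f' p < 0 := by
    rw [hfp]; exact div_neg_of_neg_of_pos (by linarith [hx.2]) (sub_pos.2 hxy)
  have hq_pos : 0 < f' q := by
    rw [hfq]; exact div_pos (by linarith [hz.2]) (sub_pos.2 hyz)
  -- Quasiconcavity of `f'` forbids `f' t > f' p` for `t < p`, since `f' p < f' q` with `p < q`.
  have hneg : ∀ t ∈ Ioo a p, f' t < 0 := by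
    intro t ht
    by_contra! ht_nonneg
    have hmem := ((hf' (min (f' t) (f' q))).ordConnected).out
      ⟨ht.1, min_le_left _ _⟩ ⟨hx.1.trans (hp.1.trans (hp.2.trans hq.1)), min_le_right _ _⟩
      ⟨ht.2.le, (hp.2.trans hq.1).le⟩
    exact hmem.2.not_gt (lt_min (hp_neg.trans_le ht_nonneg) (hp_neg.trans hq_pos))
  have hanti : StrictAntiOn f (Icc a p) := by
    refine strictAntiOn_of_hasDerivWithinAt_neg (f' := f') (convex_Icc a p) (hcont le_rfl)
      (fun t ht => ?_) fun t ht => hneg t (by rwa [interior_Icc] at ht)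
    rw [interior_Icc] at ht
    exact (hderiv t ht.1).hasDerivWithinAt
  have := hanti ⟨le_rfl, (hx.1.trans hp.1).le⟩ ⟨hx.1.le, hp.1.le⟩ hx.1
  linarith [hx.2]

namespace ExpFixedPoint

noncomputable def residual (d : ℝ) (n : ℕ) (t : ℝ) : ℝ := 1 - exp (-d * t ^ n) - t

theorem continuous_residual (d : ℝ) (n : ℕ) : Continuous (residual d n) := by
  unfold residual
  fun_prop

theorem hasDerivAt_residual (d : ℝ) (n : ℕ) (t : ℝ) :
    HasDerivAt (residual d n) (d * n * t ^ (n - 1) * exp (-d * t ^ n) - 1) t :=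
  ((((hasDerivAt_pow n t).const_mul (-d)).exp.const_sub 1).sub (hasDerivAt_id t)).congr_deriv
    (by ring)

theorem hasDerivAt_residual_of_pos (d : ℝ) (n : ℕ) {t : ℝ} (ht : 0 < t) :
    HasDerivAt (residual d n) (d * n * exp ((n - 1 : ℕ) * log t - d * t ^ n) - 1) t := by
  convert hasDerivAt_residual d n t using 1
  rw [exp_sub, exp_nat_mul, exp_log ht, neg_mul, exp_neg, div_eq_mul_inv]
  ring

/-- The function `φ` of the statement, with `k = n + 1`. -/
noncomputable def potential (d : ℝ) (n : ℕ) (α : ℝ) : ℝ :=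
  exp (-d * α ^ n) + d * α ^ n - d * n / (n + 1) * α ^ (n + 1) - d / (n + 1)

theorem hasDerivAt_potential (d : ℝ) (n : ℕ) (α : ℝ) :
    HasDerivAt (potential d n) (d * n * α ^ (n - 1) * residual d n α) α := by
  have h := ((((hasDerivAt_pow n α).const_mul (-d)).exp.add ((hasDerivAt_pow n α).const_mul d)).sub
    ((hasDerivAt_pow (n + 1) α).const_mul (d * n / (n + 1)))).sub_const (d / (n + 1))
  refine h.congr_deriv ?_
  have hα : (n : ℝ) * α ^ n = n * (α ^ (n - 1) * α) := by
    rcases n with _ | n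
    · simp
    · rw [Nat.add_sub_cancel, pow_succ]
  simp only [residual]
  push_cast
  field_simp
  linear_combination (-d) * hα

theorem quasiconcaveOn_deriv_residual {d : ℝ} (hd : 0 ≤ d) (n : ℕ) :
    QuasiconcaveOn ℝ (Ioi 0) fun t => d * n * exp ((n - 1 : ℕ) * log t - d * t ^ n) - 1 := by
  have hlog : ConcaveOn ℝ (Ioi 0) fun t => ((n - 1 : ℕ) : ℝ) * log t - d * t ^ n :=
    (strictConcaveOn_log_Ioi.concaveOn.smul (Nat.cast_nonneg _)).sub
      (((convexOn_pow n).subset Ioi_subset_Ici_self (convex_Ioi 0)).smul hd)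
  exact hlog.quasiconcaveOn.monotone_comp (g := fun u => d * n * exp u - 1) fun u v huv => by
    dsimp only
    gcongr

variable {d : ℝ} {n : ℕ}

theorem ordConnected_residual_nonneg (hd : 0 ≤ d) (hn : n ≠ 0) :
    OrdConnected {t | 0 < t ∧ 0 ≤ residual d n t} :=
  ordConnected_nonneg_of_quasiconcaveOn_deriv (continuous_residual d n).continuousOn
    (fun _ => hasDerivAt_residual_of_pos d n) (quasiconcaveOn_deriv_residual hd n)
    (by simp [residual, hn])

def fixedPoints (d : ℝ) (n : ℕ) : Set ℝ := {x | x ∈ Icc 0 1 ∧ x = 1 - exp (-d * x ^ n)}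

theorem residual_eq_zero_iff {x : ℝ} : residual d n x = 0 ↔ x = 1 - exp (-d * x ^ n) := by
  rw [residual]; constructor <;> intro h <;> linarith

theorem residual_one_neg : residual d n 1 < 0 := by
  simp [residual, exp_pos]

theorem sSup_fixedPoints_mem (hn : n ≠ 0) : sSup (fixedPoints d n) ∈ fixedPoints d n := by
  refine IsClosed.csSup_mem ?_ ⟨0, by simp [fixedPoints, hn]⟩ ⟨1, fun x hx => hx.1.2⟩
  exact isClosed_Icc.inter (isClosed_eq continuous_id (by fun_prop))

theorem residual_neg_of_sSup_lt (hn : n ≠ 0) {t : ℝ} (ht : sSup (fixedPoints d n) < t)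
    (ht1 : t ≤ 1) : residual d n t < 0 := by
  by_contra! h
  obtain ⟨y, hy, hy0⟩ := intermediate_value_Icc' ht1 (continuous_residual d n).continuousOn
    ⟨residual_one_neg.le, h⟩
  have hyS : y ∈ fixedPoints d n :=
    ⟨⟨(sSup_fixedPoints_mem hn).1.1.trans (ht.le.trans hy.1), hy.2⟩, residual_eq_zero_iff.1 hy0⟩
  exact (le_csSup ⟨1, fun x hx => hx.1.2⟩ hyS).not_gt (ht.trans_le hy.1)

theorem monotoneOn_potential (hd : 0 ≤ d) {a b : ℝ} (ha : 0 ≤ a)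
    (h : ∀ t ∈ Ioo a b, 0 ≤ residual d n t) : MonotoneOn (potential d n) (Icc a b) := by
  refine monotoneOn_of_hasDerivWithinAt_nonneg (convex_Icc a b)
    (fun t _ => (hasDerivAt_potential d n t).continuousAt.continuousWithinAt)
    (fun t _ => (hasDerivAt_potential d n t).hasDerivWithinAt) fun t ht => ?_
  rw [interior_Icc] at ht
  have := (ha.trans_lt ht.1).le
  have := h t ht
  positivity

theorem antitoneOn_potential (hd : 0 ≤ d) {a b : ℝ} (ha : 0 ≤ a)
    (h : ∀ t ∈ Ioo a b, residual d n t ≤ 0) : AntitoneOn (potential d n) (Icc a b) := by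
  refine antitoneOn_of_hasDerivWithinAt_nonpos (convex_Icc a b)
    (fun t _ => (hasDerivAt_potential d n t).continuousAt.continuousWithinAt)
    (fun t _ => (hasDerivAt_potential d n t).hasDerivWithinAt) fun t ht => ?_
  rw [interior_Icc] at ht
  have := (ha.trans_lt ht.1).le
  exact mul_nonpos_of_nonneg_of_nonpos (by positivity) (h t ht)

theorem potential_zero (hn : n ≠ 0) : potential d n 0 = 1 - d / (n + 1) := by
  simp [potential, hn]

theorem potential_of_residual_eq_zero {ρ : ℝ} (hρ : residual d n ρ = 0) :
    potential d n ρ = 1 - d / (n + 1) - (ρ - d * ρ ^ n + d * (1 - 1 / (n + 1)) * ρ ^ (n + 1)) := by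
  have hexp : exp (-d * ρ ^ n) = 1 - ρ := by rw [residual] at hρ; linarith
  rw [potential, hexp]
  field_simp
  ring

theorem potential_le_max (hd : 0 ≤ d) (hn : n ≠ 0) {ρ : ℝ} (hρ0 : 0 ≤ ρ)
    (hρ : residual d n ρ = 0) (hlargest : ∀ t ∈ Ioc ρ 1, residual d n t < 0) {α : ℝ}
    (hα : α ∈ Icc 0 1) : potential d n α ≤ max (potential d n 0) (potential d n ρ) := by
  rcases le_or_gt ρ α with hρα | hαρ
  · refine le_max_of_le_right (antitoneOn_potential hd hρ0 (fun t ht => ?_)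
      ⟨le_rfl, hρα.trans hα.2⟩ ⟨hρα, hα.2⟩ hρα)
    exact (hlargest t ⟨ht.1, ht.2.le⟩).le
  by_cases hpos : ∃ s ∈ Ioo 0 α, 0 < residual d n s
  · obtain ⟨s, hs, hrs⟩ := hpos
    have hρmem : ρ ∈ {t | 0 < t ∧ 0 ≤ residual d n t} := ⟨hs.1.trans (hs.2.trans hαρ), hρ.ge⟩
    refine le_max_of_le_right (monotoneOn_potential hd hα.1 (fun t ht => ?_)
      ⟨le_rfl, hαρ.le⟩ ⟨hαρ.le, le_rfl⟩ hαρ.le)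
    exact ((ordConnected_residual_nonneg hd hn).out ⟨hs.1, hrs.le⟩ hρmem
      ⟨(hs.2.trans ht.1).le, ht.2.le⟩).2
  · push Not at hpos
    exact le_max_of_le_left (antitoneOn_potential hd le_rfl hpos
      ⟨le_rfl, hα.1⟩ ⟨hα.1, le_rfl⟩ hα.1)

end ExpFixedPoint

open ExpFixedPoint in
theorem phi_sup_at_zero_below_threshold
    (k : ℕ) (hk : 3 ≤ k) (d : ℝ) (hd : 0 < d)
    (φ : ℝ → ℝ)
    (hφ : φ = fun α => Real.exp (-d * α ^ (k - 1)) + d * α ^ (k - 1)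
      - d * ((k : ℝ) - 1) / k * α ^ k - d / k)
    (ρ : ℝ)
    (hρ : ρ = sSup {x : ℝ | x ∈ Set.Icc (0 : ℝ) 1 ∧ x = 1 - Real.exp (-d * x ^ (k - 1))})
    (hcond : 0 ≤ ρ - d * ρ ^ (k - 1) + d * (1 - 1 / (k : ℝ)) * ρ ^ k) :
    (∀ α ∈ Set.Icc (0 : ℝ) 1, φ α ≤ 1 - d / k) ∧ φ 0 = 1 - d / k := by
  obtain ⟨n, rfl⟩ : ∃ n, k = n + 1 := ⟨k - 1, by omega⟩
  have hn : n ≠ 0 := by omega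
  have hφ' : φ = potential d n := by
    subst hφ; funext α; simp [potential]
  replace hρ : ρ = sSup (fixedPoints d n) := by
    rw [hρ, fixedPoints, Nat.add_sub_cancel]
  have hρS : ρ ∈ fixedPoints d n := hρ ▸ sSup_fixedPoints_mem hn
  have hroot : residual d n ρ = 0 := residual_eq_zero_iff.2 hρS.2
  have hlargest : ∀ t ∈ Ioc ρ 1, residual d n t < 0 := fun t ht =>
    residual_neg_of_sSup_lt hn (hρ ▸ ht.1) ht.2
  have hφρ : potential d n ρ ≤ 1 - d / (n + 1) := by
    rw [potential_of_residual_eq_zero hroot]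
    simp only [Nat.add_sub_cancel, Nat.cast_add, Nat.cast_one] at hcond
    linarith
  subst hφ'
  push_cast
  exact ⟨fun α hα => (potential_le_max hd.le hn hρS.1.1 hroot hlargest hα).trans
    (max_le (potential_zero hn).le hφρ), potential_zero hn⟩
end

section
/- Let k ≥ 3 and d > 0, and let ρ be the largest fixed point in [0,1] of f(α) = 1 - exp(-d α^{k-1}). If ρ - d ρ^{k-1} + d(1-1/k) ρ^k < 0 (i.e., d > d_k), then the function φ(α) = exp(-d α^{k-1}) + d α^{k-1} - (d(k-1)/k) α^k - d/k attains its supremum on [0,1] at α = ρ, and this supremum equals 1 - d/k - ρ + d ρ^{k-1} - (d(k-1)/k) ρ^k. -/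
/-!
Since `φ' α = d (k - 1) α ^ (k - 2) (f α - α)` and `φ' 1 < 0`, a maximiser `c` of `φ` on
`[0, 1]` is a fixed point of `f` (possibly `0`), hence `c ≤ ρ`. At a fixed point the relation
`d c ^ (k - 1) = -log (1 - c)` eliminates `d`: `φ c = 1 - d / k + h c` with
`h c = -c - (1 - (k - 1) / k * c) * log (1 - c)` (`fixedPointValue k c`). The derivative of `h`
changes sign at most once, from negative to positive, so `h c ≤ max (h 0) (h ρ) = h ρ`; indeed
`h ρ > 0` is exactly the threshold condition on `d`.
-/

open Real Set

theorem le_max_of_deriv_sign_change {f f' : ℝ → ℝ} {a b x : ℝ} (hx : x ∈ Icc a b)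
    (hf : ∀ y ∈ Icc a b, HasDerivAt f (f' y) y)
    (hsign : ∀ y z, a < y → y < z → z ≤ b → 0 ≤ f' y → 0 < f' z) :
    f x ≤ max (f a) (f b) := by
  rcases hx.1.eq_or_lt with rfl | hax
  · exact le_max_left _ _
  have hcont : ContinuousOn f (Icc a b) := fun y hy => (hf y hy).continuousAt.continuousWithinAt
  have hderiv : ∀ {s : Set ℝ}, s ⊆ Icc a b →
      ∀ y ∈ interior s, HasDerivWithinAt f (f' y) (interior s) y :=
    fun hs y hy => (hf y (hs (interior_subset hy))).hasDerivWithinAt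
  by_cases hx' : 0 ≤ f' x
  · have hmono : MonotoneOn f (Icc x b) :=
      monotoneOn_of_hasDerivWithinAt_nonneg (convex_Icc x b)
        (hcont.mono (Icc_subset_Icc_left hx.1)) (hderiv (Icc_subset_Icc_left hx.1))
        (fun z hz => by
          rw [interior_Icc] at hz
          exact (hsign x z hax hz.1 hz.2.le hx').le)
    exact (hmono (left_mem_Icc.2 hx.2) (right_mem_Icc.2 hx.2) hx.2).trans (le_max_right _ _)
  · have hanti : AntitoneOn f (Icc a x) :=
      antitoneOn_of_hasDerivWithinAt_nonpos (convex_Icc a x)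
        (hcont.mono (Icc_subset_Icc_right hx.2)) (hderiv (Icc_subset_Icc_right hx.2))
        (fun y hy => by
          rw [interior_Icc] at hy
          by_contra! hy'
          exact hx' (hsign y x hy.1 hy.2 hx.2 hy'.le).le)
    exact (hanti (left_mem_Icc.2 hax.le) (right_mem_Icc.2 hax.le) hax.le).trans (le_max_left _ _)

/-- The function `u ↦ (κ - 1) * (u * log u) + 1 - u` is strictly convex and vanishes at `1`. -/
theorem mul_log_add_one_sub_pos_of_lt {κ u v : ℝ} (hκ : 1 < κ) (hu : 0 < u) (huv : u < v)
    (hv : v < 1)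
    (h : 0 ≤ (κ - 1) * (v * log v) + 1 - v) : 0 < (κ - 1) * (u * log u) + 1 - u := by
  have hslope := strictConvexOn_mul_log.slope_strict_mono_adjacent
    (mem_Ici.2 hu.le) (mem_Ici.2 zero_le_one) huv hv
  rw [log_one, mul_zero, div_lt_div_iff₀ (by linarith) (by linarith)] at hslope
  nlinarith [mul_pos (sub_pos.2 hκ) (sub_pos.2 huv), mul_pos (sub_pos.2 hκ) (sub_pos.2 hv)]

noncomputable def fixedPointValue (κ c : ℝ) : ℝ := -c - (1 - (κ - 1) / κ * c) * log (1 - c)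

theorem fixedPointValue_zero (κ : ℝ) : fixedPointValue κ 0 = 0 := by simp [fixedPointValue]

theorem hasDerivAt_fixedPointValue {κ c : ℝ} (hκ : κ ≠ 0) (hc : c < 1) :
    HasDerivAt (fixedPointValue κ)
      (((κ - 1) * ((1 - c) * log (1 - c)) + c) / (κ * (1 - c))) c := by
  have hc' : 1 - c ≠ 0 := by linarith
  have hlog : HasDerivAt (fun x => log (1 - x)) ((1 - c)⁻¹ * -1) c :=
    (hasDerivAt_log hc').comp c ((hasDerivAt_id c).const_sub 1)
  have hlin : HasDerivAt (fun x => 1 - (κ - 1) / κ * x) (-((κ - 1) / κ)) c := by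
    simpa using ((hasDerivAt_id c).const_mul ((κ - 1) / κ)).const_sub 1
  refine ((hasDerivAt_id c).neg.sub (hlin.mul hlog)).congr_deriv ?_
  field_simp
  ring

theorem fixedPointValue_le_max {κ c r : ℝ} (hκ : 1 < κ) (hc : c ∈ Icc 0 r) (hr : r < 1) :
    fixedPointValue κ c ≤ max 0 (fixedPointValue κ r) := by
  rw [← fixedPointValue_zero κ]
  refine le_max_of_deriv_sign_change hc
    (fun y hy => hasDerivAt_fixedPointValue (by linarith) (hy.2.trans_lt hr)) ?_
  intro y z hy hyz hz hy'
  have hκ0 : 0 < κ := by linarith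
  have hy1 : 0 < 1 - y := by linarith
  have hz1 : 0 < 1 - z := by linarith
  rw [div_nonneg_iff] at hy'
  have hyp : 0 ≤ (κ - 1) * ((1 - y) * log (1 - y)) + 1 - (1 - y) := by
    rcases hy' with ⟨h, -⟩ | ⟨-, h⟩
    · linarith
    · nlinarith
  have hzp := mul_log_add_one_sub_pos_of_lt hκ hz1 (by linarith) (by linarith) hyp
  exact div_pos (by linarith) (by positivity)

noncomputable def phi (k : ℕ) (d α : ℝ) : ℝ :=
  exp (-d * α ^ (k - 1)) + d * α ^ (k - 1) - d * ((k : ℝ) - 1) / k * α ^ k - d / k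

theorem hasDerivAt_phi {k : ℕ} (hk : 2 ≤ k) (d x : ℝ) :
    HasDerivAt (phi k d)
      (d * ((k : ℝ) - 1) * x ^ (k - 2) * (1 - exp (-d * x ^ (k - 1)) - x)) x := by
  have hk0 : (k : ℝ) ≠ 0 := by positivity
  have hpow : HasDerivAt (fun α : ℝ => α ^ (k - 1)) (((k : ℝ) - 1) * x ^ (k - 2)) x := by
    have h := hasDerivAt_pow (k - 1) x
    rwa [Nat.cast_sub (by omega), Nat.cast_one, show k - 1 - 1 = k - 2 by omega] at h
  refine (((hpow.const_mul (-d)).exp.add (hpow.const_mul d)).sub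
    ((hasDerivAt_pow k x).const_mul (d * ((k : ℝ) - 1) / k))).sub_const (d / k)
    |>.congr_deriv ?_
  rw [show x ^ (k - 1) = x ^ (k - 2) * x by rw [← pow_succ]; congr 1; omega]
  field_simp
  ring

theorem fixedPointValue_eq_of_fixed {k : ℕ} (hk : 1 ≤ k) {d c : ℝ}
    (hfix : exp (-d * c ^ (k - 1)) = 1 - c) :
    fixedPointValue k c = -(c - d * c ^ (k - 1) + d * (1 - 1 / (k : ℝ)) * c ^ k) := by
  have hk0 : (k : ℝ) ≠ 0 := by positivity
  have hlog : log (1 - c) = -(d * c ^ (k - 1)) := by rw [← hfix, log_exp]; ring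
  rw [fixedPointValue, hlog, show c ^ k = c ^ (k - 1) * c by rw [← pow_succ]; congr 1; omega]
  field_simp
  ring

theorem phi_eq_of_fixed {k : ℕ} (hk : 1 ≤ k) {d c : ℝ}
    (hfix : exp (-d * c ^ (k - 1)) = 1 - c) :
    phi k d c = 1 - d / k + fixedPointValue k c := by
  have hk0 : (k : ℝ) ≠ 0 := by positivity
  rw [fixedPointValue_eq_of_fixed hk hfix, phi, hfix]
  field_simp
  ring

theorem exists_fixedPoint_isMaxOn_phi {k : ℕ} (hk : 2 ≤ k) {d : ℝ} (hd : 0 < d) :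
    ∃ c ∈ Ico (0 : ℝ) 1,
      exp (-d * c ^ (k - 1)) = 1 - c ∧ IsMaxOn (phi k d) (Icc 0 1) c := by
  have hk' : (0 : ℝ) < (k : ℝ) - 1 := by
    have : (2 : ℝ) ≤ k := by exact_mod_cast hk
    linarith
  obtain ⟨c, hc, hmax⟩ := isCompact_Icc.exists_isMaxOn (nonempty_Icc.2 zero_le_one)
    fun x _ => (hasDerivAt_phi hk d x).continuousAt.continuousWithinAt
  have hc1 : c < 1 := by
    refine hc.2.lt_of_ne fun h1 => ?_
    subst h1
    have hseg : segment ℝ (1 : ℝ) 0 ⊆ Icc 0 1 := by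
      rw [segment_symm, segment_eq_Icc zero_le_one]
    have := hmax.localize.hasFDerivWithinAt_nonpos
      (hasDerivAt_phi hk d 1).hasDerivWithinAt.hasFDerivWithinAt
      (sub_mem_posTangentConeAt_of_segment_subset hseg)
    simp only [one_pow, mul_one, sub_sub_cancel_left, mul_neg, zero_sub,
      ContinuousLinearMap.toSpanSingleton_apply, smul_eq_mul, neg_mul, one_mul, neg_neg] at this
    nlinarith [exp_pos (-d), mul_pos hd hk']
  refine ⟨c, ⟨hc.1, hc1⟩, ?_, hmax⟩
  rcases hc.1.eq_or_lt with rfl | hc0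
  · simp [zero_pow (show k - 1 ≠ 0 by omega)]
  · have hcrit := (hmax.isLocalMax (Icc_mem_nhds hc0 hc1)).hasDerivAt_eq_zero
      (hasDerivAt_phi hk d c)
    have : d * ((k : ℝ) - 1) * c ^ (k - 2) ≠ 0 := by positivity
    linarith [(mul_eq_zero.1 hcrit).resolve_left this]

theorem isGreatest_sSup_fixedPoints {k : ℕ} (hk : 2 ≤ k) (d : ℝ) :
    IsGreatest {x : ℝ | x ∈ Icc (0 : ℝ) 1 ∧ x = 1 - exp (-d * x ^ (k - 1))}
      (sSup {x : ℝ | x ∈ Icc (0 : ℝ) 1 ∧ x = 1 - exp (-d * x ^ (k - 1))}) :=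
  (isCompact_Icc.inter_right (isClosed_eq continuous_id (by fun_prop))).isGreatest_sSup
    ⟨0, left_mem_Icc.2 zero_le_one, by simp [zero_pow (show k - 1 ≠ 0 by omega)]⟩

theorem phi_sup_at_rho_above_threshold
    (k : ℕ) (hk : 3 ≤ k) (d : ℝ) (hd : 0 < d)
    (φ : ℝ → ℝ)
    (hφ : φ = fun α => Real.exp (-d * α ^ (k - 1)) + d * α ^ (k - 1)
      - d * ((k : ℝ) - 1) / k * α ^ k - d / k)
    (ρ : ℝ)
    (hρ : ρ = sSup {x : ℝ | x ∈ Set.Icc (0 : ℝ) 1 ∧ x = 1 - Real.exp (-d * x ^ (k - 1))})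
    (hcond : ρ - d * ρ ^ (k - 1) + d * (1 - 1 / (k : ℝ)) * ρ ^ k < 0) :
    (∀ α ∈ Set.Icc (0 : ℝ) 1, φ α ≤ φ ρ) ∧
    φ ρ = 1 - d / k - ρ + d * ρ ^ (k - 1) - d * ((k : ℝ) - 1) / k * ρ ^ k := by
  change φ = phi k d at hφ
  subst hφ
  obtain ⟨⟨hρI, hρfix⟩, hρmax⟩ := hρ ▸ isGreatest_sSup_fixedPoints (by omega) d
  replace hρfix : exp (-d * ρ ^ (k - 1)) = 1 - ρ := by linarith
  have hρ1 : ρ < 1 := hρI.2.lt_of_ne fun h => by simp [h, exp_ne_zero] at hρfix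
  have hρvalue : 0 ≤ fixedPointValue k ρ := by
    rw [fixedPointValue_eq_of_fixed (by omega) hρfix]
    linarith
  obtain ⟨c, hc, hcfix, hcmax⟩ := exists_fixedPoint_isMaxOn_phi (by omega : 2 ≤ k) hd
  have hcρ : c ≤ ρ := hρmax ⟨Ico_subset_Icc_self hc, by linarith⟩
  have hk1 : (1 : ℝ) < k := by exact_mod_cast (by omega : 1 < k)
  refine ⟨fun α hα => ?_, ?_⟩
  · calc phi k d α ≤ phi k d c := hcmax hα
      _ = 1 - d / k + fixedPointValue k c := phi_eq_of_fixed (by omega) hcfix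
      _ ≤ 1 - d / k + fixedPointValue k ρ := by
        grw [fixedPointValue_le_max hk1 ⟨hc.1, hcρ⟩ hρ1, max_eq_right hρvalue]
      _ = phi k d ρ := (phi_eq_of_fixed (by omega) hρfix).symm
  · rw [phi, hρfix]
    ring
end
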